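/- (Capacity removability for first-order distributions) Let Ω ⊆ ℝⁿ be open and let T be a distribution on Ω of order at most 1 in the following quantitative sense: there is a constant A such that |T(v)| ≤ A·‖v‖_{C¹} for all v ∈ C_c^∞(Ω). Let Σ ⊆ Ω be a closed subset such that for every δ > 0 there exists χ ∈ C_c^∞(Ω) with 0 ≤ χ ≤ 1, χ = 1 on an open neighbourhood of Σ, and ‖χ‖_{W^{1,1}(Ω)} < δ. Suppose T is nonpositive on Ω \ Σ, i.e. T(v) ≤ 0 for every nonnegative v ∈ C_c^∞(Ω \ Σ). If additionally T has the form T(v) = −∫_Ω ⟨G, ∇v⟩ − ∫_Ω H·v for some G ∈ L^∞(Ω; ℝⁿ) and H ∈ L^∞(Ω), then T(v) ≤ 0 for every nonnegative v ∈ C_c^∞(Ω); in particular T is a nonpositive Radon measure on Ω. -/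

import Mathlib

open MeasureTheory

section aux

variable {n : ℕ}

local notation "E" => EuclideanSpace ℝ (Fin n)

lemma my_grad_eq (f : E → ℝ) :
    gradient f = fun x => (InnerProductSpace.toDual ℝ E).symm (fderiv ℝ f x) := rfl

lemma my_grad_cont (f : E → ℝ) (hf : ContDiff ℝ (⊤ : ℕ∞) f) : Continuous (gradient f) := by
  rw [my_grad_eq]
  exact (InnerProductSpace.toDual ℝ E).symm.continuous.comp (hf.continuous_fderiv (by simp))

lemma my_grad_supp (f : E → ℝ) (hf : HasCompactSupport f) :
    HasCompactSupport (gradient f) := by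
  rw [my_grad_eq]
  exact (hf.fderiv (𝕜 := ℝ)).comp_left (map_zero _)

lemma my_grad_mul (f g : E → ℝ) (hf : Differentiable ℝ f) (hg : Differentiable ℝ g) (x : E) :
    gradient (fun y => f y * g y) x = f x • gradient g x + g x • gradient f x := by
  simp only [my_grad_eq]
  rw [fderiv_fun_mul (hf x) (hg x), map_add, LinearIsometryEquiv.map_smul,
    LinearIsometryEquiv.map_smul]

lemma my_grad_sub (f g : E → ℝ) (hf : Differentiable ℝ f) (hg : Differentiable ℝ g) (x : E) :
    gradient (fun y => f y - g y) x = gradient f x - gradient g x := by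
  simp only [my_grad_eq]
  simp only [fderiv_fun_sub (hf x) (hg x), map_sub]

end aux

theorem stmt15 (n : ℕ) (Ω : Set (EuclideanSpace ℝ (Fin n))) (hΩ : IsOpen Ω)
    (S : Set (EuclideanSpace ℝ (Fin n))) (hSc : IsClosed S) (hSΩ : S ⊆ Ω)
    (G : EuclideanSpace ℝ (Fin n) → EuclideanSpace ℝ (Fin n))
    (H : EuclideanSpace ℝ (Fin n) → ℝ)
    (hGm : Measurable G) (hHm : Measurable H)
    (CG CH : ℝ) (hGb : ∀ x, ‖G x‖ ≤ CG) (hHb : ∀ x, |H x| ≤ CH)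
    (T : (EuclideanSpace ℝ (Fin n) → ℝ) → ℝ)
    (hT : ∀ v, T v = -(∫ x in Ω, (inner ℝ (G x) (gradient v x) : ℝ)) -
        ∫ x in Ω, H x * v x)
    (A : ℝ)
    (hA : ∀ v : EuclideanSpace ℝ (Fin n) → ℝ, ContDiff ℝ (⊤ : ℕ∞) v → HasCompactSupport v →
        tsupport v ⊆ Ω →
        |T v| ≤ A * ((⨆ x, |v x|) + ⨆ x, ‖gradient v x‖))
    (hcap : ∀ δ > (0 : ℝ), ∃ χ : EuclideanSpace ℝ (Fin n) → ℝ,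
        ContDiff ℝ (⊤ : ℕ∞) χ ∧ HasCompactSupport χ ∧ tsupport χ ⊆ Ω ∧
        (∀ x, χ x ∈ Set.Icc (0 : ℝ) 1) ∧
        (∃ U, IsOpen U ∧ S ⊆ U ∧ ∀ x ∈ U, χ x = 1) ∧
        (∫ x in Ω, (|χ x| + ‖gradient χ x‖)) < δ)
    (hneg : ∀ v : EuclideanSpace ℝ (Fin n) → ℝ, ContDiff ℝ (⊤ : ℕ∞) v → HasCompactSupport v →
        tsupport v ⊆ Ω \ S → (∀ x, 0 ≤ v x) → T v ≤ 0) :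
    ∀ v : EuclideanSpace ℝ (Fin n) → ℝ, ContDiff ℝ (⊤ : ℕ∞) v → HasCompactSupport v →
      tsupport v ⊆ Ω → (∀ x, 0 ≤ v x) → T v ≤ 0 := by
  intro v hv hvcs hvΩ hv0
  have hCG : (0 : ℝ) ≤ CG := le_trans (norm_nonneg _) (hGb 0)
  have hCH : (0 : ℝ) ≤ CH := le_trans (abs_nonneg _) (hHb 0)
  obtain ⟨Bv, hBv⟩ := hv.continuous.bounded_above_of_compact_support hvcs
  have hgvc : Continuous (gradient v) := my_grad_cont v hv
  have hgvs : HasCompactSupport (gradient v) := my_grad_supp v hvcs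
  obtain ⟨Bg, hBg⟩ := hgvc.bounded_above_of_compact_support hgvs
  have hBv0 : (0 : ℝ) ≤ Bv := le_trans (norm_nonneg _) (hBv 0)
  have hBg0 : (0 : ℝ) ≤ Bg := le_trans (norm_nonneg _) (hBg 0)
  set K : ℝ := (CG + CH) * (Bv + Bg) with hK
  have hK0 : 0 ≤ K := mul_nonneg (by linarith) (by linarith)
  -- it suffices to show T v ≤ ε for all ε > 0
  have key : ∀ ε > (0 : ℝ), T v ≤ ε := by
    intro ε hε
    have hδpos : 0 < ε / (K + 1) := div_pos hε (by linarith)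
    obtain ⟨χ, hχ, hχcs, hχΩ, hχIcc, ⟨U, hUo, hSU, hU1⟩, hχint⟩ := hcap _ hδpos
    set u : EuclideanSpace ℝ (Fin n) → ℝ := fun x => χ x * v x with hu
    set w : EuclideanSpace ℝ (Fin n) → ℝ := fun x => (1 - χ x) * v x with hw
    have hχd : Differentiable ℝ χ := hχ.differentiable (by simp)
    have hvd : Differentiable ℝ v := hv.differentiable (by simp)
    have hus : ContDiff ℝ (⊤ : ℕ∞) u := hχ.mul hv
    have hws : ContDiff ℝ (⊤ : ℕ∞) w := (contDiff_const.sub hχ).mul hv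
    have hucs : HasCompactSupport u := hvcs.mono (fun x hx => by
      intro hv0'; apply hx; simp [hu, hv0'])
    have hwcs : HasCompactSupport w := hvcs.mono (fun x hx => by
      intro hv0'; apply hx; simp [hw, hv0'])
    -- gradients
    have hgu : ∀ x, gradient u x = χ x • gradient v x + v x • gradient χ x :=
      my_grad_mul χ v hχd hvd
    have hvwu : ∀ x, v x = w x + u x := fun x => by simp [hu, hw]; ring
    have hgw : ∀ x, gradient w x = gradient v x - gradient u x := by
      intro x
      have : w = fun y => v y - u y := by funext y; simp [hu, hw]; ring
      rw [this, my_grad_sub v u hvd (hus.differentiable (by simp))]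
    -- continuity and compact support of gradient u
    have hguc : Continuous (gradient u) := my_grad_cont u hus
    have hgus : HasCompactSupport (gradient u) := my_grad_supp u hucs
    have hgwc : Continuous (gradient w) := my_grad_cont w hws
    have hgws : HasCompactSupport (gradient w) := my_grad_supp w hwcs
    have hgχc : Continuous (gradient χ) := my_grad_cont χ hχ
    -- integrability
    have int_inner : ∀ (f : EuclideanSpace ℝ (Fin n) → EuclideanSpace ℝ (Fin n)),
        Continuous f → HasCompactSupport f →
        IntegrableOn (fun x => (inner ℝ (G x) (f x) : ℝ)) Ω := by
      intro f hfc hfs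
      apply Integrable.integrableOn
      apply Integrable.mono' ((continuous_const.mul hfc.norm).integrable_of_hasCompactSupport
        ((hfs.norm).mul_left))
      · exact (hGm.inner hfc.measurable).aestronglyMeasurable
      · filter_upwards with x
        calc ‖(inner ℝ (G x) (f x) : ℝ)‖ ≤ ‖G x‖ * ‖f x‖ := norm_inner_le_norm _ _
        _ ≤ CG * ‖f x‖ := by
            exact mul_le_mul_of_nonneg_right (hGb x) (norm_nonneg _)
    have int_H : ∀ (f : EuclideanSpace ℝ (Fin n) → ℝ),
        Continuous f → HasCompactSupport f →
        IntegrableOn (fun x => H x * f x) Ω := by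
      intro f hfc hfs
      apply Integrable.integrableOn
      apply Integrable.mono' ((continuous_const.mul hfc.norm).integrable_of_hasCompactSupport
        ((hfs.norm).mul_left))
      · exact (hHm.mul hfc.measurable).aestronglyMeasurable
      · filter_upwards with x
        calc ‖H x * f x‖ = |H x| * ‖f x‖ := by rw [norm_mul]; rfl
        _ ≤ CH * ‖f x‖ := mul_le_mul_of_nonneg_right (hHb x) (norm_nonneg _)
    have I1 := int_inner (gradient u) hguc hgus
    have I2 := int_inner (gradient w) hgwc hgws
    have I3 := int_H u hus.continuous hucs
    have I4 := int_H w hws.continuous hwcs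
    -- split T v = T w + Eu
    have hTsplit : T v = T w + (-(∫ x in Ω, (inner ℝ (G x) (gradient u x) : ℝ)) -
        ∫ x in Ω, H x * u x) := by
      rw [hT v, hT w]
      have e1 : (∫ x in Ω, (inner ℝ (G x) (gradient v x) : ℝ)) =
          (∫ x in Ω, (inner ℝ (G x) (gradient w x) : ℝ)) +
          ∫ x in Ω, (inner ℝ (G x) (gradient u x) : ℝ) := by
        rw [← integral_add I2 I1]
        apply integral_congr_ae
        filter_upwards with x
        rw [hgw x]
        simp [inner_sub_right]
      have e2 : (∫ x in Ω, H x * v x) =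
          (∫ x in Ω, H x * w x) + ∫ x in Ω, H x * u x := by
        rw [← integral_add I4 I3]
        apply integral_congr_ae
        filter_upwards with x
        rw [hvwu x]; ring
      rw [e1, e2]; ring
    -- T w ≤ 0
    have hTw : T w ≤ 0 := by
      apply hneg w hws hwcs
      · have hsupp : Function.support w ⊆ Function.support v ∩ Uᶜ := by
          intro x hx
          constructor
          · intro hv0'; apply hx; simp [hw, hv0']
          · intro hxU; apply hx; simp [hw, hU1 x hxU]
        have : tsupport w ⊆ tsupport v ∩ Uᶜ := by
          apply closure_minimal (hsupp.trans (Set.inter_subset_inter subset_closure le_rfl))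
          exact (isClosed_closure).inter (hUo.isClosed_compl)
        intro x hx
        rcases this hx with ⟨h1, h2⟩
        exact ⟨hvΩ h1, fun hxS => h2 (hSU hxS)⟩
      · intro x
        exact mul_nonneg (by linarith [(hχIcc x).2]) (hv0 x)
    -- bound the error term
    have hptwise : ∀ x, ‖(inner ℝ (G x) (gradient u x) : ℝ)‖ + ‖H x * u x‖ ≤
        K * (|χ x| + ‖gradient χ x‖) := by
      intro x
      have h1 : ‖(inner ℝ (G x) (gradient u x) : ℝ)‖ ≤
          CG * (|χ x| * Bg + Bv * ‖gradient χ x‖) := by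
        calc ‖(inner ℝ (G x) (gradient u x) : ℝ)‖ ≤ ‖G x‖ * ‖gradient u x‖ :=
              norm_inner_le_norm _ _
        _ ≤ CG * ‖gradient u x‖ :=
              mul_le_mul_of_nonneg_right (hGb x) (norm_nonneg _)
        _ ≤ CG * (|χ x| * Bg + Bv * ‖gradient χ x‖) := by
              apply mul_le_mul_of_nonneg_left _ hCG
              rw [hgu x]
              calc ‖χ x • gradient v x + v x • gradient χ x‖ ≤
                    ‖χ x • gradient v x‖ + ‖v x • gradient χ x‖ := norm_add_le _ _
              _ = |χ x| * ‖gradient v x‖ + |v x| * ‖gradient χ x‖ := by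
                  rw [norm_smul, norm_smul]; rfl
              _ ≤ |χ x| * Bg + Bv * ‖gradient χ x‖ := by
                  have := hBg x
                  have hb := hBv x
                  rw [Real.norm_eq_abs] at hb
                  gcongr
      have h2 : ‖H x * u x‖ ≤ CH * (Bv * |χ x|) := by
        have hb := hBv x
        rw [Real.norm_eq_abs] at hb
        calc ‖H x * u x‖ = |H x| * (|χ x| * |v x|) := by
              rw [norm_mul, Real.norm_eq_abs, Real.norm_eq_abs, hu]
              simp [abs_mul]
        _ ≤ CH * (|χ x| * |v x|) := mul_le_mul_of_nonneg_right (hHb x)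
              (mul_nonneg (abs_nonneg _) (abs_nonneg _))
        _ ≤ CH * (|χ x| * Bv) := mul_le_mul_of_nonneg_left
              (mul_le_mul_of_nonneg_left hb (abs_nonneg _)) hCH
        _ = CH * (Bv * |χ x|) := by ring
      have hχa : 0 ≤ |χ x| := abs_nonneg _
      have hgχa : 0 ≤ ‖gradient χ x‖ := norm_nonneg _
      calc ‖(inner ℝ (G x) (gradient u x) : ℝ)‖ + ‖H x * u x‖ ≤
            CG * (|χ x| * Bg + Bv * ‖gradient χ x‖) + CH * (Bv * |χ x|) := by linarith
      _ ≤ K * (|χ x| + ‖gradient χ x‖) := by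
            rw [hK]
            nlinarith [mul_nonneg hCG (mul_nonneg hBv0 hχa),
              mul_nonneg hCH (mul_nonneg hBg0 hχa),
              mul_nonneg hCH (mul_nonneg hBv0 hgχa),
              mul_nonneg hCH (mul_nonneg hBg0 hgχa),
              mul_nonneg hCG (mul_nonneg hBv0 hχa),
              mul_nonneg hCG (mul_nonneg hBg0 hgχa)]
    -- integrability of the χ bound
    have Iχ : IntegrableOn (fun x => |χ x| + ‖gradient χ x‖) Ω := by
      apply Integrable.integrableOn
      apply Continuous.integrable_of_hasCompactSupport
      · exact (hχ.continuous.abs).add (my_grad_cont χ hχ).norm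
      · apply HasCompactSupport.add
        · exact hχcs.abs
        · exact (my_grad_supp χ hχcs).norm
    have herr : |(-(∫ x in Ω, (inner ℝ (G x) (gradient u x) : ℝ)) -
        ∫ x in Ω, H x * u x)| ≤ K * (ε / (K + 1)) := by
      have hb1 : |∫ x in Ω, (inner ℝ (G x) (gradient u x) : ℝ)| ≤
          ∫ x in Ω, ‖(inner ℝ (G x) (gradient u x) : ℝ)‖ := by
        have := norm_integral_le_integral_norm (μ := volume.restrict Ω)
          (fun x => (inner ℝ (G x) (gradient u x) : ℝ))
        rwa [Real.norm_eq_abs] at this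
      have hb2 : |∫ x in Ω, H x * u x| ≤ ∫ x in Ω, ‖H x * u x‖ := by
        have := norm_integral_le_integral_norm (μ := volume.restrict Ω)
          (fun x => H x * u x)
        rwa [Real.norm_eq_abs] at this
      have hsum : (∫ x in Ω, ‖(inner ℝ (G x) (gradient u x) : ℝ)‖) +
          (∫ x in Ω, ‖H x * u x‖) ≤ K * (ε / (K + 1)) := by
        rw [← integral_add I1.norm I3.norm]
        calc (∫ x in Ω, (‖(inner ℝ (G x) (gradient u x) : ℝ)‖ + ‖H x * u x‖)) ≤
              ∫ x in Ω, K * (|χ x| + ‖gradient χ x‖) := by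
              apply integral_mono (I1.norm.add I3.norm) (Iχ.const_mul K)
              intro x; exact hptwise x
        _ = K * ∫ x in Ω, (|χ x| + ‖gradient χ x‖) := by rw [integral_const_mul]
        _ ≤ K * (ε / (K + 1)) := by
              apply mul_le_mul_of_nonneg_left (le_of_lt hχint) hK0
      calc |(-(∫ x in Ω, (inner ℝ (G x) (gradient u x) : ℝ)) - ∫ x in Ω, H x * u x)| ≤
            |∫ x in Ω, (inner ℝ (G x) (gradient u x) : ℝ)| + |∫ x in Ω, H x * u x| := by
            rw [sub_eq_add_neg]
            refine (abs_add_le _ _).trans ?_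
            rw [abs_neg, abs_neg]
      _ ≤ K * (ε / (K + 1)) := by linarith
    have hKδ : K * (ε / (K + 1)) < ε := by
      rw [mul_div_assoc']
      rw [div_lt_iff₀ (by linarith : (0:ℝ) < K + 1)]
      nlinarith
    calc T v = T w + (-(∫ x in Ω, (inner ℝ (G x) (gradient u x) : ℝ)) -
          ∫ x in Ω, H x * u x) := hTsplit
    _ ≤ 0 + K * (ε / (K + 1)) := by
          apply add_le_add hTw
          exact le_trans (le_abs_self _) herr
    _ ≤ ε := by linarith
  by_contra hc
  push_neg at hc
  have := key (T v / 2) (by linarith)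
  linarith
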